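/- arXiv:1508.03248 — 2 statements merged into one kernel-verified Lean document; each statement's English description precedes it below -/
import Mathlib

section
/- Let A, β, γ be real numbers with 0 < A, 0 < β, 0 < γ and A + 2β + 2γ < π. Let a, b, c, u, U, v, V, p, q be positive real numbers with b = u + U and c = v + V, satisfying the hyperbolic law-of-sines relations: sinh a / sin A = sinh b / sin(2β) = sinh c / sin(2γ); sinh q / sin(2β) = sinh V / sin γ; sinh q / sin A = sinh v / sin γ; sinh p / sin(2γ) = sinh U / sin β; and sinh p / sin A = sinh u / sin β. If p = q, then β = γ. (This is the trigonometric content of the Steiner–Lehmus theorem in hyperbolic geometry: in a hyperbolic triangle ABC with angles A, B = 2β, C = 2γ, opposite side lengths a, b, c, internal bisector BB' of length p dividing side AC as b = u + U with u = AB', U = B'C, and internal bisector CC' of length q dividing side AB as c = v + V with v = AC', V = C'B, equality of the two internal bisectors forces the triangle to be isosceles.) -/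
/-!
Put `s = sinh p = sinh q`. The four bisector relations express `sinh u, sinh U, sinh v, sinh V` as
`s` times ratios of sines, and expanding `sinh (u + U)`, `sinh (v + V)` turns the remaining law of
sines `sinh b · sin 2γ = sinh c · sin 2β` into an identity between two sums of two positive terms.
If `β < γ`, then `u < v` and `U < V` (for the latter because `sin 2β < sin 2γ`, as `2β + 2γ < π`),
and together with `cos γ < cos β` each term on the `γ`-side strictly dominates its counterpart.
-/

open Real

lemma Real.sin_lt_sin_of_lt_of_add_lt_pi {x y : ℝ} (hx : 0 ≤ x) (hxy : x < y) (hsum : x + y < π) :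
    sin x < sin y := by
  have hdiff : 0 < sin ((y - x) / 2) := sin_pos_of_pos_of_lt_pi (by linarith) (by linarith)
  have hmid : 0 < cos ((y + x) / 2) := cos_pos_of_mem_Ioo ⟨by linarith, by linarith⟩
  have := sin_sub_sin y x
  nlinarith [mul_pos hdiff hmid]

lemma Real.cosh_lt_cosh_of_nonneg_of_lt {x y : ℝ} (hx : 0 ≤ x) (hxy : x < y) : cosh x < cosh y :=
  cosh_lt_cosh.2 (by rwa [abs_of_nonneg hx, abs_of_nonneg (hx.trans hxy.le)])

lemma sinh_add_mul_sin_two_mul_lt {β γ k s u U v V : ℝ} (hβ : 0 < β) (hβγ : β < γ)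
    (hsum : β + γ < π / 2) (hk : 0 < k) (hs : 0 < s)
    (hu : s * sin β = sinh u * k) (hU : s * sin β = sinh U * sin (2 * γ))
    (hv : s * sin γ = sinh v * k) (hV : s * sin γ = sinh V * sin (2 * β)) :
    sinh (u + U) * sin (2 * γ) < sinh (v + V) * sin (2 * β) := by
  have hsinβ : 0 < sin β := sin_pos_of_pos_of_lt_pi hβ (by linarith [pi_pos])
  have hsin2β : 0 < sin (2 * β) := sin_pos_of_pos_of_lt_pi (by linarith) (by linarith)
  have hsin : sin β < sin γ := sin_lt_sin_of_lt_of_add_lt_pi hβ.le hβγ (by linarith [pi_pos])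
  have hsin2 : sin (2 * β) < sin (2 * γ) :=
    sin_lt_sin_of_lt_of_add_lt_pi (by linarith) (by linarith) (by linarith)
  have hcos : cos γ < cos β := cos_lt_cos_of_nonneg_of_le_pi hβ.le (by linarith) hβγ
  have hsβ : 0 < s * sin β := mul_pos hs hsinβ
  have hsγ : s * sin β < s * sin γ := mul_lt_mul_of_pos_left hsin hs
  have hu_pos : 0 < u := sinh_pos_iff.1 (pos_of_mul_pos_left (hu ▸ hsβ) hk.le)
  have hU_pos : 0 < U := sinh_pos_iff.1 (pos_of_mul_pos_left (hU ▸ hsβ) (by linarith))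
  have huv : u < v := sinh_lt_sinh.1 (lt_of_mul_lt_mul_right (hu ▸ hv ▸ hsγ) hk.le)
  have hUV : U < V := by
    have hV_pos : 0 < sinh V := pos_of_mul_pos_left (hV ▸ hsβ.trans hsγ) hsin2β.le
    refine sinh_lt_sinh.1 (lt_of_mul_lt_mul_right ?_ (hsin2β.trans hsin2).le)
    calc sinh U * sin (2 * γ) < sinh V * sin (2 * β) := hU ▸ hV ▸ hsγ
      _ < sinh V * sin (2 * γ) := mul_lt_mul_of_pos_left hsin2 hV_pos
  -- `sin β · sin 2γ < sin γ · sin 2β` is `cos γ < cos β`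
  have hfirst : sinh u * sin (2 * γ) < sinh v * sin (2 * β) := by
    refine lt_of_mul_lt_mul_right ?_ hk.le
    calc sinh u * sin (2 * γ) * k = 2 * (s * sin β * sin γ) * cos γ := by
          rw [sin_two_mul]; linear_combination -(2 * sin γ * cos γ * hu)
      _ < 2 * (s * sin β * sin γ) * cos β := by
          gcongr; exact mul_pos two_pos (mul_pos hsβ (hsinβ.trans hsin))
      _ = sinh v * sin (2 * β) * k := by rw [sin_two_mul]; linear_combination 2 * sin β * cos β * hv
  calc sinh (u + U) * sin (2 * γ) = sinh u * sin (2 * γ) * cosh U + s * sin β * cosh u := by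
        rw [sinh_add]; linear_combination -(cosh u * hU)
    _ < sinh v * sin (2 * β) * cosh V + s * sin γ * cosh v := by
        gcongr ?_ + ?_
        · exact mul_lt_mul'' hfirst (cosh_lt_cosh_of_nonneg_of_lt hU_pos.le hUV)
            (mul_pos (sinh_pos_iff.2 hu_pos) (by linarith)).le (cosh_pos U).le
        · exact mul_lt_mul'' hsγ (cosh_lt_cosh_of_nonneg_of_lt hu_pos.le huv) hsβ.le (cosh_pos u).le
    _ = sinh (v + V) * sin (2 * β) := by rw [sinh_add]; linear_combination cosh v * hV

theorem steiner_lehmus_hyperbolic_general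
    (A β γ : ℝ) (hA : 0 < A) (hβ : 0 < β) (hγ : 0 < γ)
    (hsum : A + 2 * β + 2 * γ < π)
    (b c u U v V p q : ℝ)
    (hp : 0 < p)
    (hbuU : b = u + U) (hcvV : c = v + V)
    (h1' : sinh b / sin (2 * β) = sinh c / sin (2 * γ))
    (h2 : sinh q / sin (2 * β) = sinh V / sin γ)
    (h3 : sinh q / sin A = sinh v / sin γ)
    (h4 : sinh p / sin (2 * γ) = sinh U / sin β)
    (h5 : sinh p / sin A = sinh u / sin β)
    (hpq : p = q) :
    β = γ := by
  subst hpq hbuU hcvV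
  have hsin_ne : ∀ {x}, 0 < x → x < π → sin x ≠ 0 := fun h0 hπ => (sin_pos_of_pos_of_lt_pi h0 hπ).ne'
  have hsA : 0 < sin A := sin_pos_of_pos_of_lt_pi hA (by linarith)
  have hsβ := hsin_ne hβ (by linarith); have hsγ := hsin_ne hγ (by linarith)
  have hs2β := hsin_ne (x := 2 * β) (by linarith) (by linarith)
  have hs2γ := hsin_ne (x := 2 * γ) (by linarith) (by linarith)
  rw [div_eq_div_iff hs2β hs2γ] at h1'
  rw [div_eq_div_iff hs2β hsγ] at h2
  rw [div_eq_div_iff hsA.ne' hsγ] at h3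
  rw [div_eq_div_iff hs2γ hsβ] at h4
  rw [div_eq_div_iff hsA.ne' hsβ] at h5
  have hs : 0 < sinh p := sinh_pos_iff.2 hp
  rcases lt_trichotomy β γ with hβγ | heq | hγβ
  · exact absurd h1' (sinh_add_mul_sin_two_mul_lt hβ hβγ (by linarith) hsA hs h5 h4 h3 h2).ne
  · exact heq
  · exact absurd h1' (sinh_add_mul_sin_two_mul_lt hγ hγβ (by linarith) hsA hs h3 h2 h5 h4).ne'

theorem steiner_lehmus_hyperbolic
    (A β γ : ℝ) (hA : 0 < A) (hβ : 0 < β) (hγ : 0 < γ)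
    (hsum : A + 2 * β + 2 * γ < π)
    (a b c u U v V p q : ℝ)
    (ha : 0 < a) (hb : 0 < b) (hc : 0 < c)
    (hu : 0 < u) (hU : 0 < U) (hv : 0 < v) (hV : 0 < V)
    (hp : 0 < p) (hq : 0 < q)
    (hbuU : b = u + U) (hcvV : c = v + V)
    (h1 : sinh a / sin A = sinh b / sin (2 * β))
    (h1' : sinh b / sin (2 * β) = sinh c / sin (2 * γ))
    (h2 : sinh q / sin (2 * β) = sinh V / sin γ)
    (h3 : sinh q / sin A = sinh v / sin γ)
    (h4 : sinh p / sin (2 * γ) = sinh U / sin β)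
    (h5 : sinh p / sin A = sinh u / sin β)
    (hpq : p = q) :
    β = γ :=
  steiner_lehmus_hyperbolic_general A β γ hA hβ hγ hsum b c u U v V p q hp hbuU hcvV h1' h2 h3 h4 h5
    hpq
end

section
/- Let A, β, γ be real numbers with 0 < A, 0 < β < γ and A + 2β + 2γ < π, and let b, c, u, v, p, q be positive real numbers satisfying: sinh b / sin(2β) = sinh c / sin(2γ); sinh q / sin A = sinh v / sin γ; and sinh p / sin A = sinh u / sin β. If p = q, then (sinh b / sinh u) / (sinh c / sinh v) = cos β / cos γ, and consequently sinh b / sinh u > sinh c / sinh v. -/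
/-! Since `p = q`, the two bisector triangles give `sinh u / sinh v = sin β / sin γ`, while triangle
`ABC` gives `sinh b / sinh c = sin 2β / sin 2γ`. Dividing, the sines cancel against the double-angle
formula and leave `cos β / cos γ`, which exceeds `1` because `0 < β < γ < π / 2`. -/

open Real

lemma sin_two_mul_div_sin_two_mul_div_sin_div_sin {β γ : ℝ} (hβ : sin β ≠ 0) (hγ : sin γ ≠ 0) :
    sin (2 * β) / sin (2 * γ) / (sin β / sin γ) = cos β / cos γ := by
  rw [sin_two_mul, sin_two_mul]
  field_simp

lemma cos_pos_and_cos_lt_cos {β γ : ℝ} (hβ : 0 < β) (hβγ : β < γ) (hγ : γ < π / 2) :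
    0 < cos γ ∧ cos γ < cos β :=
  ⟨cos_pos_of_mem_Ioo ⟨by linarith, hγ⟩,
    cos_lt_cos_of_nonneg_of_le_pi hβ.le (by linarith [pi_pos]) hβγ⟩

theorem ratio_cos_general
    (A β γ : ℝ) (hA : 0 < A) (hβ : 0 < β) (hβγ : β < γ)
    (hsum : A + 2 * β + 2 * γ < π)
    (b c u v p q : ℝ)
    (hc : 0 < c) (hv : 0 < v)
    (h1 : sinh b / sin (2 * β) = sinh c / sin (2 * γ))
    (h3 : sinh q / sin A = sinh v / sin γ)
    (h5 : sinh p / sin A = sinh u / sin β)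
    (hpq : p = q) :
    (sinh b / sinh u) / (sinh c / sinh v) = cos β / cos γ ∧
      sinh c / sinh v < sinh b / sinh u := by
  have hγ : γ < π / 2 := by linarith
  have hsβ : sin β ≠ 0 := (sin_pos_of_pos_of_lt_pi hβ (by linarith)).ne'
  have hsγ : sin γ ≠ 0 := (sin_pos_of_pos_of_lt_pi (hβ.trans hβγ) (by linarith)).ne'
  have hs2γ : sin (2 * γ) ≠ 0 := (sin_pos_of_pos_of_lt_pi (by linarith) (by linarith)).ne'
  obtain ⟨hcγ, hcβγ⟩ := cos_pos_and_cos_lt_cos hβ hβγ hγ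
  have hshc : 0 < sinh c := sinh_pos_iff.2 hc
  have hshv : 0 < sinh v := sinh_pos_iff.2 hv
  have hbc : sinh b / sinh c = sin (2 * β) / sin (2 * γ) :=
    div_eq_div_of_div_eq_div hshc.ne' hs2γ h1
  have huv : sinh u / sinh v = sin β / sin γ :=
    div_eq_div_of_div_eq_div hshv.ne' hsγ ((hpq ▸ h5).symm.trans h3)
  have hratio : (sinh b / sinh u) / (sinh c / sinh v) = cos β / cos γ := by
    rw [div_div_div_comm, hbc, huv, sin_two_mul_div_sin_two_mul_div_sin_div_sin hsβ hsγ]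
  refine ⟨hratio, ?_⟩
  rw [div_eq_iff (div_pos hshc hshv).ne'] at hratio
  rw [hratio]
  exact lt_mul_of_one_lt_left (div_pos hshc hshv) ((one_lt_div hcγ).2 hcβγ)

theorem ratio_cos
    (A β γ : ℝ) (hA : 0 < A) (hβ : 0 < β) (hβγ : β < γ)
    (hsum : A + 2 * β + 2 * γ < π)
    (b c u v p q : ℝ)
    (hb : 0 < b) (hc : 0 < c) (hu : 0 < u) (hv : 0 < v)
    (hp : 0 < p) (hq : 0 < q)
    (h1 : sinh b / sin (2 * β) = sinh c / sin (2 * γ))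
    (h3 : sinh q / sin A = sinh v / sin γ)
    (h5 : sinh p / sin A = sinh u / sin β)
    (hpq : p = q) :
    (sinh b / sinh u) / (sinh c / sinh v) = cos β / cos γ ∧
      sinh c / sinh v < sinh b / sinh u :=
  ratio_cos_general A β γ hA hβ hβγ hsum b c u v p q hc hv h1 h3 h5 hpq
end
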